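/- arXiv:2201.00835 — 2 statements merged into one kernel-verified Lean document; each statement's English description precedes it below -/
import Mathlib

section
/- Direct-sum inequality for the sandwiched Rényi relative entropy: for every α > 1 and classical–quantum operators κ = ∑_x p(x)|x⟩⟨x|⊗κ_x (a state) and λ = ∑_x q(x)|x⟩⟨x|⊗λ_x (positive semidefinite), one has D̃_α(κ‖λ) ≥ D(p‖q) + ∑_x p(x) D̃_α(κ_x‖λ_x). -/
open scoped Matrix Classical ComplexOrder

namespace RainsPaper

/-- Natural matrix logarithm of a Hermitian matrix via spectral decomposition
(with the convention `log 0 = 0` on the kernel); junk value `0` otherwise. -/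
noncomputable def matLog {n : Type} [Fintype n] [DecidableEq n] (A : Matrix n n ℂ) :
    Matrix n n ℂ :=
  if hA : A.IsHermitian then
    (hA.eigenvectorUnitary : Matrix n n ℂ) *
      (Matrix.diagonal fun i => (Real.log (hA.eigenvalues i) : ℂ)) *
      (star (hA.eigenvectorUnitary : Matrix n n ℂ))
  else 0

/-- Real power of a Hermitian matrix via spectral decomposition (with the convention
`0 ^ r = 0` for `r ≠ 0`, so negative powers are taken on the support);
junk value `0` otherwise. -/
noncomputable def matPow {n : Type} [Fintype n] [DecidableEq n] (A : Matrix n n ℂ) (r : ℝ) :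
    Matrix n n ℂ :=
  if hA : A.IsHermitian then
    (hA.eigenvectorUnitary : Matrix n n ℂ) *
      (Matrix.diagonal fun i => ((hA.eigenvalues i ^ r : ℝ) : ℂ)) *
      (star (hA.eigenvectorUnitary : Matrix n n ℂ))
  else 0

/-- A state is a positive semidefinite operator with unit trace. -/
def IsState {n : Type} [Fintype n] (ρ : Matrix n n ℂ) : Prop :=
  ρ.PosSemidef ∧ ρ.trace = 1

/-- `supp ω ⊆ supp τ`, expressed (for Hermitian matrices) as `ker τ ⊆ ker ω`. -/
def SuppSubset {n : Type} [Fintype n] (ω τ : Matrix n n ℂ) : Prop :=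
  ∀ v : n → ℂ, τ.mulVec v = 0 → ω.mulVec v = 0

/-- Trace norm `‖X‖₁ = Tr √(X†X)`. -/
noncomputable def traceNorm {n : Type} [Fintype n] [DecidableEq n] (X : Matrix n n ℂ) : ℝ :=
  ((matPow (Xᴴ * X) 2⁻¹).trace).re

/-- Fidelity `F(ω,τ) = ‖√ω √τ‖₁²`. -/
noncomputable def fidelity {n : Type} [Fintype n] [DecidableEq n] (ω τ : Matrix n n ℂ) : ℝ :=
  (traceNorm (matPow ω 2⁻¹ * matPow τ 2⁻¹)) ^ 2

/-- Extended base-2 logarithm: `elog2 x = log₂ x` for `x > 0` and `-∞` for `x ≤ 0`. -/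
noncomputable def elog2 (x : ℝ) : EReal :=
  if x ≤ 0 then ⊥ else ((Real.logb 2 x : ℝ) : EReal)

/-- Quantum relative entropy `D(ω‖τ) = Tr[ω (log₂ ω - log₂ τ)]` if `supp ω ⊆ supp τ`,
and `+∞` otherwise. -/
noncomputable def qRelEnt {n : Type} [Fintype n] [DecidableEq n] (ω τ : Matrix n n ℂ) : EReal :=
  if SuppSubset ω τ then
    ((((ω * (matLog ω - matLog τ)).trace).re / Real.log 2 : ℝ) : EReal)
  else ⊤

/-- Sandwiched Rényi relative entropy
`D̃_α(ω‖τ) = (α-1)⁻¹ log₂ Tr[(τ^{(1-α)/(2α)} ω τ^{(1-α)/(2α)})^α]` when `α ∈ (0,1)`, or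
`α > 1` and `supp ω ⊆ supp τ`; `+∞` otherwise. -/
noncomputable def sandRenyi {n : Type} [Fintype n] [DecidableEq n] (α : ℝ)
    (ω τ : Matrix n n ℂ) : EReal :=
  if (0 < α ∧ α < 1) ∨ (1 < α ∧ SuppSubset ω τ) then
    (((α - 1)⁻¹ : ℝ) : EReal) *
      elog2 (((matPow (matPow τ ((1 - α) / (2 * α)) * ω * matPow τ ((1 - α) / (2 * α))) α).trace).re)
  else ⊤

/-- Petz Rényi relative entropy `D_α(ω‖τ) = (α-1)⁻¹ log₂ Tr[ω^α τ^{1-α}]` when `α ∈ (0,1)`,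
or `α > 1` and `supp ω ⊆ supp τ`; `+∞` otherwise. -/
noncomputable def petzRenyi {n : Type} [Fintype n] [DecidableEq n] (α : ℝ)
    (ω τ : Matrix n n ℂ) : EReal :=
  if (0 < α ∧ α < 1) ∨ (1 < α ∧ SuppSubset ω τ) then
    (((α - 1)⁻¹ : ℝ) : EReal) * elog2 (((matPow ω α * matPow τ (1 - α)).trace).re)
  else ⊤

/-- Geometric Rényi relative entropy `D̂_α(ω‖τ) = (α-1)⁻¹ log₂ Tr[τ (τ^{-1/2} ω τ^{-1/2})^α]`
(inverses on the support) when `α ∈ (0,1)`, or `α > 1` and `supp ω ⊆ supp τ`; `+∞` otherwise. -/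
noncomputable def geomRenyi {n : Type} [Fintype n] [DecidableEq n] (α : ℝ)
    (ω τ : Matrix n n ℂ) : EReal :=
  if (0 < α ∧ α < 1) ∨ (1 < α ∧ SuppSubset ω τ) then
    (((α - 1)⁻¹ : ℝ) : EReal) *
      elog2 (((τ * matPow (matPow τ (-2⁻¹) * ω * matPow τ (-2⁻¹)) α).trace).re)
  else ⊤

/-- Classical relative entropy `D(p‖q)`, equal to `+∞` unless `supp p ⊆ supp q`
(terms with `p x = 0` contribute zero). -/
noncomputable def cRelEnt {X : Type} [Fintype X] (p q : X → ℝ) : EReal :=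
  if ∀ x, p x ≠ 0 → q x ≠ 0 then
    ((∑ x, p x * Real.logb 2 (p x / q x) : ℝ) : EReal)
  else ⊤

/-- `p` is a probability distribution on the finite set `X`. -/
def IsProb {X : Type} [Fintype X] (p : X → ℝ) : Prop :=
  (∀ x, 0 ≤ p x) ∧ ∑ x, p x = 1

/-- The classical–quantum operator `∑ x p(x) |x⟩⟨x| ⊗ K x`. -/
noncomputable def cqOp {X A : Type} [DecidableEq X] (p : X → ℝ)
    (K : X → Matrix A A ℂ) : Matrix (X × A) (X × A) ℂ :=
  Matrix.of fun a b => if a.1 = b.1 then (p a.1 : ℂ) * K a.1 a.2 b.2 else 0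

/-- Partial transpose (on the second tensor factor):
`(id ⊗ T)(X)_{(i,k),(j,l)} = X_{(i,l),(j,k)}`. -/
def ptrans {a b : Type} (X : Matrix (a × b) (a × b) ℂ) : Matrix (a × b) (a × b) ℂ :=
  Matrix.of fun p q => X (p.1, q.2) (q.1, p.2)

/-- The partial transpose as a linear map. -/
def ptransL {a b : Type} : Matrix (a × b) (a × b) ℂ →ₗ[ℂ] Matrix (a × b) (a × b) ℂ where
  toFun := ptrans
  map_add' _ _ := rfl
  map_smul' _ _ := rfl

/-- `PPT'` : positive semidefinite bipartite operators whose partial transpose has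
trace norm at most 1. -/
def PPTprime {a b : Type} [Fintype a] [Fintype b] [DecidableEq a] [DecidableEq b]
    (σ : Matrix (a × b) (a × b) ℂ) : Prop :=
  σ.PosSemidef ∧ traceNorm (ptrans σ) ≤ 1

/-- The Rains relative entropy `R(ρ) = inf_{σ ∈ PPT'} D(ρ‖σ)`. -/
noncomputable def Rains {a b : Type} [Fintype a] [Fintype b] [DecidableEq a] [DecidableEq b]
    (ρ : Matrix (a × b) (a × b) ℂ) : EReal :=
  ⨅ σ : {σ : Matrix (a × b) (a × b) ℂ // PPTprime σ}, qRelEnt ρ σ.1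

/-- The sandwiched Rényi Rains relative entropy `R̃_α(ρ) = inf_{σ ∈ PPT'} D̃_α(ρ‖σ)`. -/
noncomputable def sandRains {a b : Type} [Fintype a] [Fintype b] [DecidableEq a] [DecidableEq b]
    (α : ℝ) (ρ : Matrix (a × b) (a × b) ℂ) : EReal :=
  ⨅ σ : {σ : Matrix (a × b) (a × b) ℂ // PPTprime σ}, sandRenyi α ρ σ.1

/-- The extension `id_{Fin k} ⊗ Φ` of a linear map on matrices. -/
def matExt {n m : Type} [Fintype n] [Fintype m]
    (Φ : Matrix n n ℂ →ₗ[ℂ] Matrix m m ℂ) (k : ℕ)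
    (X : Matrix (Fin k × n) (Fin k × n) ℂ) : Matrix (Fin k × m) (Fin k × m) ℂ :=
  Matrix.of fun p q => Φ (Matrix.of fun i j => X (p.1, i) (q.1, j)) p.2 q.2

/-- Complete positivity: all extensions `id_k ⊗ Φ` preserve positive semidefiniteness. -/
def IsCP {n m : Type} [Fintype n] [Fintype m]
    (Φ : Matrix n n ℂ →ₗ[ℂ] Matrix m m ℂ) : Prop :=
  ∀ (k : ℕ) (X : Matrix (Fin k × n) (Fin k × n) ℂ), X.PosSemidef → (matExt Φ k X).PosSemidef

/-- Trace preservation. -/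
def IsTP {n m : Type} [Fintype n] [Fintype m]
    (Φ : Matrix n n ℂ →ₗ[ℂ] Matrix m m ℂ) : Prop :=
  ∀ X : Matrix n n ℂ, (Φ X).trace = X.trace

/-- A selective PPT operation: a family of completely positive maps `P x` such that
`(id ⊗ T) ∘ P x ∘ (id ⊗ T)` is completely positive for every `x` and `∑ x, P x` is
trace preserving. -/
def IsSelectivePPT {a b a' b' X : Type} [Fintype a] [Fintype b] [Fintype a'] [Fintype b']
    [Fintype X]
    (P : X → (Matrix (a × b) (a × b) ℂ →ₗ[ℂ] Matrix (a' × b') (a' × b') ℂ)) : Prop :=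
  (∀ x, IsCP (P x)) ∧ (∀ x, IsCP (ptransL ∘ₗ P x ∘ₗ ptransL)) ∧
    (∀ ρ : Matrix (a × b) (a × b) ℂ, ∑ x, ((P x) ρ).trace = ρ.trace)

/-- The maximally entangled state `Φ^d = |Φ^d⟩⟨Φ^d|`, `|Φ^d⟩ = d^{-1/2} ∑ i |i⟩|i⟩`. -/
noncomputable def maxEnt (d : ℕ) : Matrix (Fin d × Fin d) (Fin d × Fin d) ℂ :=
  Matrix.of fun p q => if p.1 = p.2 ∧ q.1 = q.2 then ((d : ℂ))⁻¹ else 0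

/-- Binary entropy `h₂(ε) = -ε log₂ ε - (1-ε) log₂ (1-ε)`. -/
noncomputable def h2 (ε : ℝ) : ℝ :=
  -ε * Real.logb 2 ε - (1 - ε) * Real.logb 2 (1 - ε)


/-!
Both operators are block diagonal, and so is everything built from them by the spectral
calculus; hence the trace inside `D̃_α(κ‖λ)` splits as
`∑ₓ p(x)^α q(x)^{1-α} Q̃_α(κₓ‖λₓ) = ∑ₓ p(x) yₓ` with `yₓ = (p(x)/q(x))^{α-1} Q̃_α(κₓ‖λₓ)`.
Concavity of the logarithm with weights `p` gives `log ∑ₓ p(x) yₓ ≥ ∑ₓ p(x) log yₓ`, which is the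
claim after dividing by `(α - 1) log 2`. If `supp κ ⊄ supp λ` the left side is `+∞`; otherwise
`supp κₓ ⊆ supp λₓ` and `q(x) > 0` wherever `p(x) > 0`, which makes every `yₓ` there positive.
-/

open Matrix Unitary

section SpectralCalculus

variable {n : Type} [Fintype n] [DecidableEq n]

lemma spectral_theorem' {A : Matrix n n ℂ} (hA : A.IsHermitian) :
    A = (hA.eigenvectorUnitary : Matrix n n ℂ) * diagonal (fun i => (hA.eigenvalues i : ℂ)) *
      star (hA.eigenvectorUnitary : Matrix n n ℂ) := by
  conv_lhs => rw [hA.spectral_theorem]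
  rfl

lemma matPow_of_isHermitian {A : Matrix n n ℂ} (hA : A.IsHermitian) (r : ℝ) :
    matPow A r = (hA.eigenvectorUnitary : Matrix n n ℂ) *
      diagonal (fun i => ((hA.eigenvalues i ^ r : ℝ) : ℂ)) *
      star (hA.eigenvectorUnitary : Matrix n n ℂ) :=
  dif_pos hA

lemma unitary_mul_diagonal_mul_star_mul {U : Matrix n n ℂ} (hU : U ∈ unitaryGroup n ℂ)
    (a b : n → ℂ) :
    U * diagonal a * star U * (U * diagonal b * star U) =
      U * diagonal (fun i => a i * b i) * star U := by
  calc _ = U * (diagonal a * (star U * U) * diagonal b) * star U := by simp only [mul_assoc]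
    _ = _ := by rw [star_mul_self_of_mem hU, mul_one, diagonal_mul_diagonal]

lemma diagonal_comp_mul_eq_mul_diagonal_comp {m : Type} [Fintype m] [DecidableEq m]
    {W : Matrix m n ℂ} {e : m → ℝ} {d : n → ℝ} (f : ℝ → ℝ)
    (h : diagonal (fun i => (e i : ℂ)) * W = W * diagonal (fun j => (d j : ℂ))) :
    diagonal (fun i => (f (e i) : ℂ)) * W = W * diagonal (fun j => (f (d j) : ℂ)) := by
  ext i j
  have hij := congrFun₂ h i j
  simp only [diagonal_mul, mul_diagonal] at hij ⊢
  by_cases hW : W i j = 0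
  · simp [hW]
  · have : e i = d j := by exact_mod_cast mul_left_cancel₀ hW ((mul_comm _ _).trans hij)
    rw [this, mul_comm]

/-- The spectral calculus does not depend on the chosen diagonalization. -/
lemma unitary_mul_diagonal_comp_mul_star_eq {U V : Matrix n n ℂ} (hU : U ∈ unitaryGroup n ℂ)
    (hV : V ∈ unitaryGroup n ℂ) {d e : n → ℝ}
    (h : V * diagonal (fun i => (e i : ℂ)) * star V =
      U * diagonal (fun i => (d i : ℂ)) * star U)
    (f : ℝ → ℝ) :
    V * diagonal (fun i => (f (e i) : ℂ)) * star V =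
      U * diagonal (fun i => (f (d i) : ℂ)) * star U := by
  have hW : diagonal (fun i => (e i : ℂ)) * (star V * U) =
      star V * U * diagonal (fun j => (d j : ℂ)) :=
    calc _ = star V * (V * diagonal (fun i => (e i : ℂ)) * star V) * U := by
          simp only [mul_assoc, star_mul_self_of_mem hV, ← mul_assoc (star V) V, one_mul]
      _ = _ := by
          rw [h]; simp only [mul_assoc, star_mul_self_of_mem hU, mul_one]
  calc V * diagonal (fun i => (f (e i) : ℂ)) * star V
      = V * (diagonal (fun i => (f (e i) : ℂ)) * (star V * U)) * star U := by
        simp only [mul_assoc, mul_star_self_of_mem hU, mul_one]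
    _ = (V * star V) * U * diagonal (fun i => (f (d i) : ℂ)) * star U := by
        rw [diagonal_comp_mul_eq_mul_diagonal_comp f hW]
        simp only [mul_assoc]
    _ = _ := by rw [mul_star_self_of_mem hV, one_mul]

lemma matPow_unitary_mul_diagonal_mul_star {U : Matrix n n ℂ} (hU : U ∈ unitaryGroup n ℂ)
    (d : n → ℝ) (r : ℝ) :
    matPow (U * diagonal (fun i => (d i : ℂ)) * star U) r =
      U * diagonal (fun i => ((d i ^ r : ℝ) : ℂ)) * star U := by
  have hA : (U * diagonal (fun i => (d i : ℂ)) * star U).IsHermitian := by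
    simp [IsHermitian, star_eq_conjTranspose, mul_assoc, diagonal_conjTranspose, Pi.star_def]
  rw [matPow_of_isHermitian hA]
  exact unitary_mul_diagonal_comp_mul_star_eq hU hA.eigenvectorUnitary.2
    (spectral_theorem' hA).symm (· ^ r)

end SpectralCalculus

section Support

variable {X A : Type} [DecidableEq X] [Fintype X] [Fintype A]

lemma SuppSubset.mul_eq_self_of_mul_eq_self {B C P : Matrix A A ℂ} (h : SuppSubset B C)
    (hP : C * P = C) : B * P = B := by
  refine ext_iff_mulVec.mpr fun v => ?_
  have hker := h (v - P *ᵥ v) (by rw [mulVec_sub, mulVec_mulVec, hP, sub_self])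
  rwa [mulVec_sub, mulVec_mulVec, sub_eq_zero, eq_comm] at hker

lemma SuppSubset.of_smul {B C : Matrix A A ℂ} {a b : ℂ} (ha : a ≠ 0)
    (h : SuppSubset (a • B) (b • C)) : SuppSubset B C := fun v hv => by
  have hv' := h v (by rw [smul_mulVec, hv, smul_zero])
  rwa [smul_mulVec, smul_eq_zero, or_iff_right ha] at hv'

lemma SuppSubset.eq_zero_of_zero {B : Matrix A A ℂ} (h : SuppSubset B 0) : B = 0 :=
  ext_iff_mulVec.mpr fun v => by simpa using h v (zero_mulVec v)

lemma cqOp_mulVec_indicator (p : X → ℝ) (K : X → Matrix A A ℂ) (x : X) (w : A → ℂ) :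
    cqOp p K *ᵥ (fun z => if z.1 = x then w z.2 else 0) =
      fun z => if z.1 = x then (((p x : ℂ) • K x) *ᵥ w) z.2 else 0 := by
  ext ⟨y, b⟩
  simp only [cqOp, mulVec, dotProduct, of_apply, Fintype.sum_prod_type, Matrix.smul_apply,
    smul_eq_mul]
  split_ifs with h
  · subst h
    simp [mul_assoc]
  · simp [h]

lemma SuppSubset.cqOp_block {p q : X → ℝ} {K L : X → Matrix A A ℂ}
    (h : SuppSubset (cqOp p K) (cqOp q L)) (x : X) :
    SuppSubset ((p x : ℂ) • K x) ((q x : ℂ) • L x) := fun w hw => by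
  have hzero := h _ (by rw [cqOp_mulVec_indicator, hw]; ext; simp)
  rw [cqOp_mulVec_indicator] at hzero
  exact funext fun a => by simpa using congrFun hzero (x, a)

end Support

section PositiveSemidefinite

variable {n : Type} [Fintype n] [DecidableEq n]

lemma matPow_posSemidef {A : Matrix n n ℂ} (hA : A.PosSemidef) (r : ℝ) :
    (matPow A r).PosSemidef := by
  have hD : (diagonal fun i => ((hA.1.eigenvalues i ^ r : ℝ) : ℂ)).PosSemidef :=
    posSemidef_diagonal_iff.mpr fun i =>
      Complex.zero_le_real.mpr (Real.rpow_nonneg (hA.eigenvalues_nonneg i) r)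
  rw [matPow_of_isHermitian hA.1]
  simpa [star_eq_conjTranspose] using hD.mul_mul_conjTranspose_same _

lemma trace_matPow {A : Matrix n n ℂ} (hA : A.IsHermitian) (r : ℝ) :
    (matPow A r).trace = ((∑ i, hA.eigenvalues i ^ r : ℝ) : ℂ) := by
  rw [matPow_of_isHermitian hA, trace_mul_cycle, star_mul_self_of_mem hA.eigenvectorUnitary.2,
    one_mul, trace_diagonal]
  push_cast
  rfl

lemma trace_matPow_re_pos {A : Matrix n n ℂ} (hA : A.PosSemidef) (hA0 : A ≠ 0) (r : ℝ) :
    0 < ((matPow A r).trace).re := by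
  obtain ⟨i, hi⟩ : ∃ i, hA.1.eigenvalues i ≠ 0 := by
    by_contra! h
    exact hA0 (hA.1.eigenvalues_eq_zero_iff.mp (funext h))
  rw [trace_matPow hA.1, Complex.ofReal_re]
  exact Finset.sum_pos' (fun j _ => Real.rpow_nonneg (hA.eigenvalues_nonneg j) r)
    ⟨i, Finset.mem_univ i, Real.rpow_pos_of_pos ((hA.eigenvalues_nonneg i).lt_of_ne' hi) r⟩

lemma mul_matPow_mul_matPow_neg {A : Matrix n n ℂ} (hA : A.PosSemidef) (c : ℝ) :
    A * (matPow A c * matPow A (-c)) = A := by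
  have hV := hA.1.eigenvectorUnitary.2
  rw [matPow_of_isHermitian hA.1, matPow_of_isHermitian hA.1,
    unitary_mul_diagonal_mul_star_mul hV]
  nth_rw 1 [spectral_theorem' hA.1]
  rw [unitary_mul_diagonal_mul_star_mul hV]
  conv_rhs => rw [spectral_theorem' hA.1]
  congr 3
  funext i
  rcases (hA.eigenvalues_nonneg i).eq_or_lt with h0 | hpos
  · simp [← h0]
  · rw [Real.rpow_neg hpos.le, ← Complex.ofReal_mul,
      mul_inv_cancel₀ (Real.rpow_pos_of_pos hpos c).ne', Complex.ofReal_one, mul_one]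

lemma SuppSubset.matPow_neg_mul_sandwich_mul_matPow_neg {A B : Matrix n n ℂ} (h : SuppSubset B A)
    (hA : A.PosSemidef) (hB : B.IsHermitian) (c : ℝ) :
    matPow A (-c) * (matPow A c * B * matPow A c) * matPow A (-c) = B := by
  have hR : B * (matPow A c * matPow A (-c)) = B :=
    h.mul_eq_self_of_mul_eq_self (mul_matPow_mul_matPow_neg hA c)
  have hL : matPow A (-c) * matPow A c * B = B := by
    simpa [conjTranspose_mul, hB.eq, (matPow_posSemidef hA _).1.eq, mul_assoc] using
      congrArg conjTranspose hR
  calc _ = matPow A (-c) * matPow A c * B * (matPow A c * matPow A (-c)) := by simp only [mul_assoc]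
    _ = B := by rw [hL, hR]

end PositiveSemidefinite

section ClassicalQuantum

variable {X A : Type} [DecidableEq X]

lemma cqOp_conjTranspose (p : X → ℝ) (K : X → Matrix A A ℂ) :
    (cqOp p K)ᴴ = cqOp p (fun x => (K x)ᴴ) := by
  ext ⟨x, a⟩ ⟨y, b⟩
  simp only [cqOp, conjTranspose_apply, of_apply]
  split_ifs with h h' h' <;> simp_all [eq_comm]

lemma cqOp_diagonal [DecidableEq A] (p : X → ℝ) (d : X → A → ℂ) :
    cqOp p (fun x => diagonal (d x)) = diagonal (fun z => p z.1 * d z.1 z.2) := by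
  ext ⟨x, a⟩ ⟨y, b⟩
  simp only [cqOp, diagonal_apply, of_apply, Prod.mk.injEq]
  split_ifs <;> simp_all

lemma cqOp_mul [Fintype X] [Fintype A] (p q : X → ℝ) (K L : X → Matrix A A ℂ) :
    cqOp p K * cqOp q L = cqOp (fun x => p x * q x) (fun x => K x * L x) := by
  ext ⟨x, a⟩ ⟨y, b⟩
  simp only [cqOp, mul_apply, of_apply, Fintype.sum_prod_type, ite_mul, zero_mul, mul_ite, mul_zero]
  split_ifs with h
  · subst h
    simp [Finset.mul_sum]
    exact Finset.sum_congr rfl fun _ _ => by ring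
  · simp [h]

lemma trace_cqOp [Fintype X] [Fintype A] (p : X → ℝ) (K : X → Matrix A A ℂ) :
    (cqOp p K).trace = ∑ x, (p x : ℂ) * (K x).trace := by
  simp [cqOp, trace, Fintype.sum_prod_type, Finset.mul_sum]

variable [Fintype X] [Fintype A] [DecidableEq A]

lemma cqOp_mem_unitaryGroup {U : X → Matrix A A ℂ} (hU : ∀ x, U x ∈ unitaryGroup A ℂ) :
    cqOp 1 U ∈ unitaryGroup (X × A) ℂ := by
  rw [mem_unitaryGroup_iff, star_eq_conjTranspose, cqOp_conjTranspose, cqOp_mul]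
  simp_rw [← star_eq_conjTranspose, mul_star_self_of_mem (hU _), ← diagonal_one, cqOp_diagonal]
  simp

lemma cqOp_unitary_mul_diagonal_mul_star (p : X → ℝ) (U : X → Matrix A A ℂ)
    (d : X → A → ℝ) :
    cqOp 1 U * diagonal (fun z => ((p z.1 * d z.1 z.2 : ℝ) : ℂ)) * star (cqOp 1 U) =
      cqOp p (fun x => U x * diagonal (fun a => (d x a : ℂ)) * star (U x)) := by
  rw [star_eq_conjTranspose, cqOp_conjTranspose]
  have hdiag : diagonal (fun z : X × A => ((p z.1 * d z.1 z.2 : ℝ) : ℂ)) =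
      cqOp p (fun x => diagonal (fun a => (d x a : ℂ))) := by
    rw [cqOp_diagonal]; push_cast; rfl
  rw [hdiag, cqOp_mul, cqOp_mul]
  simp [star_eq_conjTranspose]

lemma matPow_cqOp_unitary_mul_diagonal_mul_star {p : X → ℝ} {U : X → Matrix A A ℂ}
    {d : X → A → ℝ} (hp : ∀ x, 0 ≤ p x) (hU : ∀ x, U x ∈ unitaryGroup A ℂ)
    (hd : ∀ x a, 0 ≤ d x a) (r : ℝ) :
    matPow (cqOp p (fun x => U x * diagonal (fun a => (d x a : ℂ)) * star (U x))) r =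
      cqOp (fun x => p x ^ r)
        (fun x => U x * diagonal (fun a => ((d x a ^ r : ℝ) : ℂ)) * star (U x)) := by
  rw [← cqOp_unitary_mul_diagonal_mul_star,
    matPow_unitary_mul_diagonal_mul_star (cqOp_mem_unitaryGroup hU),
    ← cqOp_unitary_mul_diagonal_mul_star]
  simp_rw [Real.mul_rpow (hp _) (hd _ _)]

lemma matPow_cqOp {p : X → ℝ} {K : X → Matrix A A ℂ} (hp : ∀ x, 0 ≤ p x)
    (hK : ∀ x, (K x).PosSemidef) (r : ℝ) :
    matPow (cqOp p K) r = cqOp (fun x => p x ^ r) (fun x => matPow (K x) r) := by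
  have hK_eq : K = fun x => ((hK x).isHermitian.eigenvectorUnitary : Matrix A A ℂ) *
      diagonal (fun a => ((hK x).isHermitian.eigenvalues a : ℂ)) *
      star ((hK x).isHermitian.eigenvectorUnitary : Matrix A A ℂ) :=
    funext fun x => spectral_theorem' (hK x).isHermitian
  conv_lhs => rw [hK_eq]
  rw [matPow_cqOp_unitary_mul_diagonal_mul_star hp
    (fun x => (hK x).isHermitian.eigenvectorUnitary.2)
    (fun x => (hK x).eigenvalues_nonneg)]
  exact congrArg _ (funext fun x => (matPow_of_isHermitian (hK x).isHermitian r).symm)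

end ClassicalQuantum

section Sandwiched

variable {n : Type} [Fintype n] [DecidableEq n]

/-- `Q̃_α(ω‖τ)`, the trace inside the logarithm of `sandRenyi`. -/
noncomputable def sandQ (α : ℝ) (ω τ : Matrix n n ℂ) : ℝ :=
  ((matPow (matPow τ ((1 - α) / (2 * α)) * ω * matPow τ ((1 - α) / (2 * α))) α).trace).re

lemma posSemidef_matPow_mul_mul_matPow {ω τ : Matrix n n ℂ} (hω : ω.PosSemidef)
    (hτ : τ.PosSemidef) (c : ℝ) : (matPow τ c * ω * matPow τ c).PosSemidef := by
  simpa [(matPow_posSemidef hτ c).isHermitian.eq] using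
    hω.conjTranspose_mul_mul_same (matPow τ c)

lemma sandQ_pos {α : ℝ} {ω τ : Matrix n n ℂ} (hω : ω.PosSemidef) (hω0 : ω ≠ 0)
    (hτ : τ.PosSemidef) (h : SuppSubset ω τ) : 0 < sandQ α ω τ := by
  refine trace_matPow_re_pos (posSemidef_matPow_mul_mul_matPow hω hτ _) (fun h0 => hω0 ?_) α
  rw [← h.matPow_neg_mul_sandwich_mul_matPow_neg hτ hω.isHermitian ((1 - α) / (2 * α)), h0]
  simp

lemma sandRenyi_eq_top {α : ℝ} {ω τ : Matrix n n ℂ} (hα : 1 < α) (h : ¬SuppSubset ω τ) :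
    sandRenyi α ω τ = ⊤ := by
  rw [sandRenyi, if_neg]
  rintro (⟨-, hα'⟩ | ⟨-, h'⟩)
  exacts [hα'.not_gt hα, h h']

lemma sandRenyi_eq_of_pos {α : ℝ} {ω τ : Matrix n n ℂ} (hα : 1 < α) (h : SuppSubset ω τ)
    (hQ : 0 < sandQ α ω τ) :
    sandRenyi α ω τ = (((α - 1)⁻¹ * Real.logb 2 (sandQ α ω τ) : ℝ) : EReal) := by
  rw [sandRenyi, if_pos (Or.inr ⟨hα, h⟩)]
  change _ * elog2 (sandQ α ω τ) = _
  rw [elog2, if_neg hQ.not_ge, EReal.coe_mul]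

lemma rpow_sandwich_eq {α p q : ℝ} (hα0 : α ≠ 0) (hα1 : α ≠ 1) (hp : 0 ≤ p)
    (hq : 0 ≤ q) :
    (q ^ ((1 - α) / (2 * α)) * p * q ^ ((1 - α) / (2 * α))) ^ α = p ^ α * q ^ (1 - α) := by
  have hα1' : 1 - α ≠ 0 := sub_ne_zero.mpr (Ne.symm hα1)
  rcases hq.eq_or_lt with rfl | hq
  · rw [Real.zero_rpow (div_ne_zero hα1' (mul_ne_zero two_ne_zero hα0)), Real.zero_rpow hα1',
      zero_mul, zero_mul, Real.zero_rpow hα0, mul_zero]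
  · rw [mul_right_comm, ← Real.rpow_add hq, Real.mul_rpow (Real.rpow_nonneg hq.le _) hp,
      ← Real.rpow_mul hq.le, mul_comm]
    congr 2
    field_simp
    ring

lemma sandQ_cqOp {X A : Type} [Fintype X] [DecidableEq X] [Fintype A] [DecidableEq A]
    {α : ℝ} (hα0 : α ≠ 0) (hα1 : α ≠ 1) {p q : X → ℝ} {K L : X → Matrix A A ℂ}
    (hp : ∀ x, 0 ≤ p x) (hq : ∀ x, 0 ≤ q x) (hK : ∀ x, (K x).PosSemidef)
    (hL : ∀ x, (L x).PosSemidef) :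
    sandQ α (cqOp p K) (cqOp q L) = ∑ x, p x ^ α * q x ^ (1 - α) * sandQ α (K x) (L x) := by
  set c := (1 - α) / (2 * α)
  have hscalar : ∀ x, 0 ≤ q x ^ c * p x * q x ^ c := fun x =>
    mul_nonneg (mul_nonneg (Real.rpow_nonneg (hq x) c) (hp x)) (Real.rpow_nonneg (hq x) c)
  rw [sandQ, matPow_cqOp hq hL, cqOp_mul, cqOp_mul,
    matPow_cqOp hscalar (fun x => posSemidef_matPow_mul_mul_matPow (hK x) (hL x) c),
    trace_cqOp, Complex.re_sum]
  refine Finset.sum_congr rfl fun x _ => ?_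
  rw [Complex.re_ofReal_mul, rpow_sandwich_eq hα0 hα1 (hp x) (hq x)]
  rfl

end Sandwiched

section Distributions

variable {X : Type} [Fintype X] {p : X → ℝ}

lemma IsProb.exists_ne_zero (hp : IsProb p) : ∃ x, p x ≠ 0 := by
  by_contra! h
  simpa [h] using hp.2

lemma IsProb.sum_mul_pos (hp : IsProb p) {y : X → ℝ} (hy : ∀ x, p x ≠ 0 → 0 < y x) :
    0 < ∑ x, p x * y x := by
  obtain ⟨x, hx⟩ := hp.exists_ne_zero
  have hpos : ∀ x, p x ≠ 0 → 0 < p x * y x := fun x hx =>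
    mul_pos ((hp.1 x).lt_of_ne' hx) (hy x hx)
  refine Finset.sum_pos' (fun x _ => ?_) ⟨x, Finset.mem_univ x, hpos x hx⟩
  by_cases hx : p x = 0
  · simp [hx]
  · exact (hpos x hx).le

lemma IsProb.sum_mul_log_le_log_sum_mul (hp : IsProb p) {y : X → ℝ}
    (hy : ∀ x, p x ≠ 0 → 0 < y x) :
    ∑ x, p x * Real.log (y x) ≤ Real.log (∑ x, p x * y x) := by
  have hsupp : ∀ f : X → ℝ, ∑ x ∈ Finset.univ.filter (fun x => p x ≠ 0), p x * f x =
      ∑ x, p x * f x := fun f =>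
    Finset.sum_filter_of_ne fun x _ hx => left_ne_zero_of_mul hx
  have hjensen := strictConcaveOn_log_Ioi.concaveOn.le_map_sum
    (t := Finset.univ.filter (fun x => p x ≠ 0)) (w := p) (p := y) (fun x _ => hp.1 x)
    (by rw [Finset.sum_filter_ne_zero]; exact hp.2) (fun x hx => hy x (Finset.mem_filter.mp hx).2)
  simpa only [smul_eq_mul, hsupp] using hjensen

lemma sum_rpow_mul_rpow_mul_eq {α : ℝ} (hα : α ≠ 0) (hp : IsProb p) (q T : X → ℝ) :
    ∑ x, p x ^ α * q x ^ (1 - α) * T x =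
      ∑ x, p x * (p x ^ (α - 1) * q x ^ (1 - α) * T x) := by
  refine Finset.sum_congr rfl fun x _ => ?_
  rw [← mul_assoc, ← mul_assoc, ← Real.rpow_one_add' (hp.1 x) (by simpa using hα)]
  ring_nf

lemma sum_rpow_mul_rpow_mul_pos {α : ℝ} (hα : α ≠ 0) (hp : IsProb p) {q T : X → ℝ}
    (hq : ∀ x, p x ≠ 0 → 0 < q x) (hT : ∀ x, p x ≠ 0 → 0 < T x) :
    0 < ∑ x, p x ^ α * q x ^ (1 - α) * T x := by
  rw [sum_rpow_mul_rpow_mul_eq hα hp]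
  exact hp.sum_mul_pos fun x hx => mul_pos (mul_pos (Real.rpow_pos_of_pos ((hp.1 x).lt_of_ne' hx) _)
    (Real.rpow_pos_of_pos (hq x hx) _)) (hT x hx)

lemma sum_mul_logb_div_add_le {α : ℝ} (hα : 1 < α) (hp : IsProb p) {q T : X → ℝ}
    (hq : ∀ x, p x ≠ 0 → 0 < q x) (hT : ∀ x, p x ≠ 0 → 0 < T x) :
    ∑ x, p x * Real.logb 2 (p x / q x) + ∑ x, p x * ((α - 1)⁻¹ * Real.logb 2 (T x)) ≤
      (α - 1)⁻¹ * Real.logb 2 (∑ x, p x ^ α * q x ^ (1 - α) * T x) := by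
  have hα1 : α - 1 ≠ 0 := sub_ne_zero.mpr hα.ne'
  set y := fun x => p x ^ (α - 1) * q x ^ (1 - α) * T x
  have hterm : ∀ x, p x * Real.logb 2 (p x / q x) + p x * ((α - 1)⁻¹ * Real.logb 2 (T x)) =
      ((α - 1) * Real.log 2)⁻¹ * (p x * Real.log (y x)) := by
    intro x
    by_cases hpx : p x = 0
    · simp [hpx]
    have hp0 := (hp.1 x).lt_of_ne' hpx
    have hq0 := hq x hpx
    have hlogy : Real.log (y x) = (α - 1) * Real.log (p x) - (α - 1) * Real.log (q x) +
        Real.log (T x) := by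
      simp only [y]
      rw [Real.log_mul (by positivity) (hT x hpx).ne', Real.log_mul (by positivity) (by positivity),
        Real.log_rpow hp0, Real.log_rpow hq0]
      ring
    rw [hlogy, Real.logb, Real.logb, Real.log_div hp0.ne' hq0.ne']
    field_simp
  calc _ = ((α - 1) * Real.log 2)⁻¹ * ∑ x, p x * Real.log (y x) := by
        rw [← Finset.sum_add_distrib, Finset.mul_sum]
        exact Finset.sum_congr rfl fun x _ => hterm x
    _ ≤ ((α - 1) * Real.log 2)⁻¹ * Real.log (∑ x, p x * y x) := by
        have : 0 < (α - 1) * Real.log 2 := mul_pos (by linarith) (Real.log_pos one_lt_two)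
        gcongr
        exact hp.sum_mul_log_le_log_sum_mul fun x hx => by
          have := (hp.1 x).lt_of_ne' hx
          have := hq x hx
          have := hT x hx
          positivity
    _ = _ := by
        rw [sum_rpow_mul_rpow_mul_eq (by linarith) hp, Real.logb]
        field_simp
        simp only [y, mul_assoc]

end Distributions

lemma EReal.coe_finset_sum {ι : Type} (s : Finset ι) (f : ι → ℝ) :
    ((∑ i ∈ s, f i : ℝ) : EReal) = ∑ i ∈ s, (f i : EReal) :=
  map_sum (⟨⟨Real.toEReal, EReal.coe_zero⟩, EReal.coe_add⟩ : ℝ →+ EReal) f s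

/-- Direct-sum inequality for the sandwiched Rényi relative entropy:
for every `α > 1` and classical–quantum `κ`, `λ`,
`D̃_α(κ‖λ) ≥ D(p‖q) + ∑ x p(x) D̃_α(κ_x‖λ_x)`. -/
theorem sandRenyi_directSum {X A : Type} [Fintype X] [DecidableEq X] [Fintype A] [DecidableEq A]
    (α : ℝ) (hα : 1 < α)
    (p q : X → ℝ) (κ lam : X → Matrix A A ℂ)
    (hp : IsProb p) (hκ : ∀ x, IsState (κ x))
    (hq : ∀ x, 0 ≤ q x) (hlam : ∀ x, (lam x).PosSemidef) :
    sandRenyi α (cqOp p κ) (cqOp q lam) ≥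
      cRelEnt p q + ∑ x, (p x : EReal) * sandRenyi α (κ x) (lam x) := by
  by_cases hss : SuppSubset (cqOp p κ) (cqOp q lam)
  swap
  · rw [sandRenyi_eq_top hα hss]
    exact le_top
  have hκ0 : ∀ x, κ x ≠ 0 := fun x h0 => by simpa [h0] using (hκ x).2
  have hqp : ∀ x, p x ≠ 0 → 0 < q x := fun x hpx => (hq x).lt_of_ne' fun hqx => by
    have h0 := hss.cqOp_block x
    rw [hqx, Complex.ofReal_zero, zero_smul] at h0
    simpa [hpx, hκ0 x] using h0.eq_zero_of_zero
  have hsupp : ∀ x, p x ≠ 0 → SuppSubset (κ x) (lam x) := fun x hpx =>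
    (hss.cqOp_block x).of_smul (by exact_mod_cast hpx)
  have hT : ∀ x, p x ≠ 0 → 0 < sandQ α (κ x) (lam x) := fun x hpx =>
    sandQ_pos (hκ x).1 (hκ0 x) (hlam x) (hsupp x hpx)
  have hQ := sandQ_cqOp (by linarith) hα.ne' hp.1 hq (fun x => (hκ x).1) hlam
  have hterm : ∀ x, (p x : EReal) * sandRenyi α (κ x) (lam x) =
      ((p x * ((α - 1)⁻¹ * Real.logb 2 (sandQ α (κ x) (lam x))) : ℝ) : EReal) := fun x => by
    by_cases hpx : p x = 0
    · simp [hpx] -- in `EReal`, `0 * ⊤ = 0`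
    · rw [sandRenyi_eq_of_pos hα (hsupp x hpx) (hT x hpx), ← EReal.coe_mul]
  rw [sandRenyi_eq_of_pos hα hss (hQ ▸ sum_rpow_mul_rpow_mul_pos (by linarith) hp hqp hT), hQ,
    cRelEnt, if_pos fun x hx => (hqp x hx).ne', Finset.sum_congr rfl fun x _ => hterm x,
    ← EReal.coe_finset_sum, ← EReal.coe_add, ge_iff_le, EReal.coe_le_coe_iff]
  exact sum_mul_logb_div_add_le hα hp hqp hT

end RainsPaper
end

section
/- The set PPT' is preserved by completely PPT-preserving channels: if P is a completely positive trace-preserving map from operators on H_A⊗H_B to operators on H_{A'}⊗H_{B'} such that (id⊗T)∘P∘(id⊗T) is completely positive, and σ ∈ PPT'(H_AB), then P(σ) ∈ PPT'(H_{A'B'}); that is, ‖(id⊗T)(P(σ))‖₁ ≤ ‖(id⊗T)(σ)‖₁ ≤ 1. -/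
open scoped Matrix Classical ComplexOrder

namespace RainsPaper

/-! With `Γ = (id⊗T) ∘ P ∘ (id⊗T)` we have `(id⊗T)(P σ) = Γ ((id⊗T) σ)`, and `Γ` is positive and
trace preserving. Such a map contracts the trace norm of a Hermitian `Y`: write `Y = Y⁺ - Y⁻`
with `‖Y‖₁ = tr Y⁺ + tr Y⁻`; then `Γ Y = Γ Y⁺ - Γ Y⁻` is a difference of positive matrices, and
`‖A - B‖₁ ≤ tr A + tr B` for positive `A, B`, as one sees by comparing diagonal entries in an
eigenbasis of `A - B`. -/

section TraceNorm

open scoped MatrixOrder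

variable {n : Type} [Fintype n] [DecidableEq n]

lemma trace_conjStarAlgAut (u : unitary (Matrix n n ℂ)) (X : Matrix n n ℂ) :
    (Unitary.conjStarAlgAut ℂ _ u X).trace = X.trace := by
  rw [Unitary.conjStarAlgAut_apply, Matrix.trace_mul_cycle, Unitary.coe_star_mul_self,
    Matrix.one_mul]

lemma _root_.Matrix.IsHermitian.trace_cfc {A : Matrix n n ℂ} (hA : A.IsHermitian) (f : ℝ → ℝ) :
    (cfc f A).trace = ∑ i, (f (hA.eigenvalues i) : ℂ) := by
  rw [hA.cfc_eq, Matrix.IsHermitian.cfc, trace_conjStarAlgAut, Matrix.trace_diagonal]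
  rfl

lemma matPow_eq_cfc {A : Matrix n n ℂ} (hA : A.IsHermitian) (r : ℝ) :
    matPow A r = cfc (· ^ r : ℝ → ℝ) A := by
  rw [hA.cfc_eq, matPow, dif_pos hA, Matrix.IsHermitian.cfc, Unitary.conjStarAlgAut_apply]
  rfl

lemma _root_.Matrix.IsHermitian.traceNorm_eq_sum_abs_eigenvalues {Z : Matrix n n ℂ}
    (hZ : Z.IsHermitian) : traceNorm Z = ∑ i, |hZ.eigenvalues i| := by
  have hsq : Zᴴ * Z = cfc (· ^ 2 : ℝ → ℝ) Z := by
    rw [hZ.eq, cfc_pow_id Z 2 hZ.isSelfAdjoint, sq]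
  have habs : cfc (· ^ (2⁻¹ : ℝ) : ℝ → ℝ) (cfc (· ^ 2 : ℝ → ℝ) Z) = cfc (|·| : ℝ → ℝ) Z := by
    rw [← cfc_comp' (hg := (Real.continuous_rpow_const (by norm_num)).continuousOn)]
    refine cfc_congr fun x _ => ?_
    rw [inv_eq_one_div, ← Real.sqrt_eq_rpow, Real.sqrt_sq_eq_abs]
  rw [traceNorm, matPow_eq_cfc (Matrix.posSemidef_conjTranspose_mul_self Z).isHermitian, hsq,
    habs, hZ.trace_cfc, ← Complex.ofReal_sum, Complex.ofReal_re]

lemma traceNorm_le_re_trace_add_of_eq_sub {Z A B : Matrix n n ℂ} (hA : A.PosSemidef)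
    (hB : B.PosSemidef) (h : Z = A - B) : traceNorm Z ≤ (A.trace + B.trace).re := by
  have hZ : Z.IsHermitian := h ▸ hA.1.sub hB.1
  set conj := Unitary.conjStarAlgAut ℂ _ (star hZ.eigenvectorUnitary)
  have hconj : ∀ {X : Matrix n n ℂ}, X.PosSemidef → (conj X).PosSemidef := fun hX => by
    simpa [conj, Matrix.star_eq_conjTranspose] using
      hX.conjTranspose_mul_mul_same (hZ.eigenvectorUnitary : Matrix n n ℂ)
  have hdiag : conj A - conj B = Matrix.diagonal (RCLike.ofReal ∘ hZ.eigenvalues) := by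
    rw [← map_sub, ← h]
    exact hZ.conjStarAlgAut_star_eigenvectorUnitary
  have hentry : ∀ i, |hZ.eigenvalues i| ≤ (conj A i i).re + (conj B i i).re := fun i => by
    have ha : 0 ≤ (conj A i i).re := (Complex.nonneg_iff.mp (hconj hA).diag_nonneg).1
    have hb : 0 ≤ (conj B i i).re := (Complex.nonneg_iff.mp (hconj hB).diag_nonneg).1
    have heig : hZ.eigenvalues i = (conj A i i).re - (conj B i i).re := by
      simpa using congrArg Complex.re (congrFun₂ hdiag i i).symm
    exact heig ▸ abs_le.mpr ⟨by linarith, by linarith⟩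
  calc traceNorm Z = ∑ i, |hZ.eigenvalues i| := hZ.traceNorm_eq_sum_abs_eigenvalues
    _ ≤ ∑ i, ((conj A i i).re + (conj B i i).re) := Finset.sum_le_sum fun i _ => hentry i
    _ = ((conj A).trace + (conj B).trace).re := by
      simp only [Matrix.trace, Matrix.diag_apply, Complex.add_re, Complex.re_sum,
        Finset.sum_add_distrib]
    _ = (A.trace + B.trace).re := by simp only [conj, trace_conjStarAlgAut]

lemma _root_.Matrix.IsHermitian.exists_posSemidef_sub_traceNorm_eq {Y : Matrix n n ℂ}
    (hY : Y.IsHermitian) : ∃ P N : Matrix n n ℂ, P.PosSemidef ∧ N.PosSemidef ∧ Y = P - N ∧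
      traceNorm Y = (P.trace + N.trace).re := by
  refine ⟨cfc (fun x : ℝ => max x 0) Y, cfc (fun x : ℝ => max (-x) 0) Y,
    Matrix.nonneg_iff_posSemidef.mp (cfc_nonneg fun x _ => le_max_right _ (0 : ℝ)),
    Matrix.nonneg_iff_posSemidef.mp (cfc_nonneg fun x _ => le_max_right _ (0 : ℝ)), ?_, ?_⟩
  · rw [← cfc_sub ..]
    nth_rewrite 1 [← cfc_id' ℝ Y]
    exact cfc_congr fun x _ => (max_zero_sub_max_neg_zero_eq_self x).symm
  · rw [hY.traceNorm_eq_sum_abs_eigenvalues, hY.trace_cfc, hY.trace_cfc,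
      ← Finset.sum_add_distrib]
    simp only [← Complex.ofReal_add, ← Complex.ofReal_sum, Complex.ofReal_re,
      max_zero_add_max_neg_zero_eq_abs_self]

end TraceNorm

lemma IsCP.posSemidef_apply {n m : Type} [Fintype n] [Fintype m]
    {Φ : Matrix n n ℂ →ₗ[ℂ] Matrix m m ℂ} (hΦ : IsCP Φ) {X : Matrix n n ℂ}
    (hX : X.PosSemidef) : (Φ X).PosSemidef :=
  (hΦ 1 _ (hX.submatrix Prod.snd)).submatrix (fun i : m => ((0 : Fin 1), i))

lemma traceNorm_map_le {n m : Type} [Fintype n] [DecidableEq n] [Fintype m] [DecidableEq m]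
    {Φ : Matrix n n ℂ →ₗ[ℂ] Matrix m m ℂ} (hpos : ∀ X, X.PosSemidef → (Φ X).PosSemidef)
    (htr : IsTP Φ) {Y : Matrix n n ℂ} (hY : Y.IsHermitian) : traceNorm (Φ Y) ≤ traceNorm Y := by
  obtain ⟨P, N, hP, hN, rfl, hnorm⟩ := hY.exists_posSemidef_sub_traceNorm_eq
  calc traceNorm (Φ (P - N)) ≤ ((Φ P).trace + (Φ N).trace).re :=
        traceNorm_le_re_trace_add_of_eq_sub (hpos P hP) (hpos N hN) (map_sub Φ P N)
    _ = traceNorm (P - N) := by rw [htr, htr, hnorm]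

lemma _root_.Matrix.IsHermitian.ptrans {a b : Type} {X : Matrix (a × b) (a × b) ℂ}
    (hX : X.IsHermitian) : (ptrans X).IsHermitian := by
  ext p q
  exact congrFun₂ hX (p.1, q.2) (q.1, p.2)

lemma IsTP.ptrans_comp_ptrans {a b a' b' : Type} [Fintype a] [Fintype b] [Fintype a']
    [Fintype b'] {P : Matrix (a × b) (a × b) ℂ →ₗ[ℂ] Matrix (a' × b') (a' × b') ℂ}
    (hP : IsTP P) : IsTP (ptransL ∘ₗ P ∘ₗ ptransL) :=
  fun X => hP (ptrans X)

/-- `PPT'` is preserved by completely PPT-preserving channels: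
if `P` is completely positive and trace preserving, `(id⊗T)∘P∘(id⊗T)` is completely
positive, and `σ ∈ PPT'`, then `P(σ) ∈ PPT'`; indeed
`‖(id⊗T)(P(σ))‖₁ ≤ ‖(id⊗T)(σ)‖₁ ≤ 1`. -/
theorem pptPrime_preserved {A B A' B' : Type}
    [Fintype A] [DecidableEq A] [Fintype B] [DecidableEq B]
    [Fintype A'] [DecidableEq A'] [Fintype B'] [DecidableEq B']
    (P : Matrix (A × B) (A × B) ℂ →ₗ[ℂ] Matrix (A' × B') (A' × B') ℂ)
    (hCP : IsCP P) (hTP : IsTP P) (hPPT : IsCP (ptransL ∘ₗ P ∘ₗ ptransL))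
    (σ : Matrix (A × B) (A × B) ℂ) (hσ : PPTprime σ) :
    PPTprime (P σ) ∧ traceNorm (ptrans (P σ)) ≤ traceNorm (ptrans σ) := by
  have hconj : ptrans (P σ) = (ptransL ∘ₗ P ∘ₗ ptransL) (ptrans σ) := rfl
  have hbound : traceNorm (ptrans (P σ)) ≤ traceNorm (ptrans σ) := hconj ▸
    traceNorm_map_le (fun _ => hPPT.posSemidef_apply) hTP.ptrans_comp_ptrans hσ.1.1.ptrans
  exact ⟨⟨hCP.posSemidef_apply hσ.1, hbound.trans hσ.2⟩, hbound⟩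

end RainsPaper
end
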